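/- arXiv:2505.18895 — 2 statements merged into one kernel-verified Lean document; each statement's English description precedes it below -/
import Mathlib

section
/- Let D, X₁, X₂ be independent with X₁ ~ Bernoulli(p), D supported in [0,C], X₂ > C almost surely, Y = 1_{X₁=0}·D + 1_{X₁=1}·X₂, and α > 1-p. Then almost surely the event {F_Y(Y) ≥ α} equals the event {X₁ = 1 and F_{X₂}(Y) ≥ (α-1+p)/p}; consequently E[1_{X₁=0}·D·1_{F_Y(Y) ≥ α}] = 0, i.e., the sensitivity of ES_α(Y) to D vanishes. -/
open MeasureTheory ProbabilityTheory

/-- With `D, X₁, X₂` independent, `X₁ ~ Bernoulli(p)`, `D` supported in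
`[0,C]`, `X₂ > C` a.s., `Y = 1_{X₁=0}·D + 1_{X₁=1}·X₂`, cdf
`F_Y(y) = 1_{y≤C}(1-p)F_D(y) + 1_{y>C}(1-p+pF_{X₂}(y))`, and `1-p < α < 1`:
almost surely `{F_Y(Y) ≥ α} = {X₁ = 1 ∧ F_{X₂}(Y) ≥ (α-1+p)/p}`, and consequently
`E[1_{X₁=0}·D·1_{F_Y(Y) ≥ α}] = 0` (the sensitivity of `ES_α(Y)` to `D` vanishes). -/
theorem stmt_5
    {Ω : Type*} [MeasureSpace Ω] [IsProbabilityMeasure (ℙ : Measure Ω)]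
    (D X₁ X₂ Y : Ω → ℝ) (p C α : ℝ)
    (hmD : Measurable D) (hmX₁ : Measurable X₁) (hmX₂ : Measurable X₂)
    (hindep : iIndepFun ![D, X₁, X₂] ℙ)
    (hC : 0 ≤ C) (hp1 : 1 - p < α) (hα1 : α < 1) (hα0 : 0 < 1 - p)
    (hBer : ∀ ω, X₁ ω = 0 ∨ X₁ ω = 1)
    (hp : (ℙ {ω | X₁ ω = 1}).toReal = p)
    (hDrange : ∀ᵐ ω ∂ℙ, D ω ∈ Set.Icc (0:ℝ) C)
    (hX₂ : ∀ᵐ ω ∂ℙ, C < X₂ ω)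
    (hY : ∀ ω, Y ω = (if X₁ ω = 0 then D ω else 0) + (if X₁ ω = 1 then X₂ ω else 0))
    (FD FX₂ FY : ℝ → ℝ)
    (hFD : ∀ y : ℝ, FD y = (ℙ {ω | D ω ≤ y}).toReal)
    (hFX₂ : ∀ y : ℝ, FX₂ y = (ℙ {ω | X₂ ω ≤ y}).toReal)
    (hFY : ∀ y : ℝ, FY y = if y ≤ C then (1 - p) * FD y else (1 - p) + p * FX₂ y) :
    (∀ᵐ ω ∂ℙ, (α ≤ FY (Y ω) ↔ (X₁ ω = 1 ∧ (α - 1 + p) / p ≤ FX₂ (Y ω)))) ∧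
    ∫ ω, (if X₁ ω = 0 then (1:ℝ) else 0) * D ω * (if α ≤ FY (Y ω) then (1:ℝ) else 0) ∂ℙ
      = 0 := by
  have hppos : 0 < p := by linarith
  have hFDle : ∀ y, FD y ≤ 1 := by
    intro y
    rw [hFD]
    calc (ℙ {ω | D ω ≤ y}).toReal ≤ (1 : ENNReal).toReal :=
          ENNReal.toReal_mono ENNReal.one_ne_top prob_le_one
      _ = 1 := by simp
  have hFDnn : ∀ y, 0 ≤ FD y := by
    intro y; rw [hFD]; exact ENNReal.toReal_nonneg
  have hae : ∀ᵐ ω ∂ℙ, (α ≤ FY (Y ω) ↔ (X₁ ω = 1 ∧ (α - 1 + p) / p ≤ FX₂ (Y ω))) := by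
    filter_upwards [hDrange, hX₂] with ω hD hX
    rcases hBer ω with h0 | h1
    · have hY0 : Y ω = D ω := by
        rw [hY]; simp [h0, show X₁ ω ≠ 1 by rw [h0]; norm_num]
      have hYC : Y ω ≤ C := by rw [hY0]; exact hD.2
      have : FY (Y ω) = (1 - p) * FD (Y ω) := by rw [hFY]; simp [hYC]
      constructor
      · intro hα
        exfalso
        have : (1 - p) * FD (Y ω) ≤ (1 - p) * 1 :=
          mul_le_mul_of_nonneg_left (hFDle _) hα0.le
        rw [mul_one] at this
        linarith [hα.trans_eq ‹FY (Y ω) = _›]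
      · rintro ⟨h, -⟩; rw [h0] at h; norm_num at h
    · have hY1 : Y ω = X₂ ω := by
        rw [hY]; simp [h1, show X₁ ω ≠ 0 by rw [h1]; norm_num]
      have hYC : ¬ (Y ω ≤ C) := by rw [hY1]; exact not_le.mpr hX
      have hFYv : FY (Y ω) = (1 - p) + p * FX₂ (Y ω) := by rw [hFY]; simp [hYC]
      rw [hFYv]
      constructor
      · intro hα
        refine ⟨h1, ?_⟩
        rw [div_le_iff₀ hppos]
        nlinarith
      · rintro ⟨-, hge⟩
        rw [div_le_iff₀ hppos] at hge
        nlinarith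
  refine ⟨hae, ?_⟩
  have hzero : ∀ᵐ ω ∂ℙ,
      (if X₁ ω = 0 then (1:ℝ) else 0) * D ω * (if α ≤ FY (Y ω) then (1:ℝ) else 0)
        = (0 : ℝ) := by
    filter_upwards [hae] with ω hiff
    by_cases h0 : X₁ ω = 0
    · by_cases hα : α ≤ FY (Y ω)
      · exfalso
        have := (hiff.mp hα).1
        rw [h0] at this; norm_num at this
      · simp [hα]
    · simp [h0]
  calc ∫ ω, (if X₁ ω = 0 then (1:ℝ) else 0) * D ω * (if α ≤ FY (Y ω) then (1:ℝ) else 0) ∂ℙ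
      = ∫ _ω, (0:ℝ) ∂ℙ := integral_congr_ae hzero
    _ = 0 := integral_zero _ _
end

section
/- Let Ũ ~ Uniform(0,1), let p ∈ (0,1), and define h_δ(Ũ) := (1/δ)(1_{Φ(Φ^{-1}(Ũ)(1+δ)) ≤ p} - 1_{Ũ ≤ p}) for δ > 0. Then for any bounded continuous function ξ: ℝ → ℝ, lim_{δ→0} E[h_δ(Ũ)·ξ(Ũ)] = -Φ^{-1}(p)·φ(Φ^{-1}(p))·ξ(p). -/
open MeasureTheory ProbabilityTheory Filter Topology

/-- The standard normal density. -/
noncomputable def stdPdf (x : ℝ) : ℝ := (Real.sqrt (2 * Real.pi))⁻¹ * Real.exp (-(x ^ 2) / 2)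

/-- The standard normal cumulative distribution function. -/
noncomputable def stdCdf (x : ℝ) : ℝ := ∫ t in Set.Iic x, stdPdf t

lemma stdPdf_eq : stdPdf = gaussianPDFReal 0 1 := by
  ext x
  simp [stdPdf, gaussianPDFReal]

lemma stdPdf_pos (x : ℝ) : 0 < stdPdf x := by
  rw [stdPdf_eq]; exact gaussianPDFReal_pos 0 1 x one_ne_zero

lemma stdPdf_cont : Continuous stdPdf := by
  unfold stdPdf; continuity

lemma stdPdf_integrable : Integrable stdPdf := by
  rw [stdPdf_eq]; exact integrable_gaussianPDFReal 0 1

lemma stdCdf_sub (a b : ℝ) : stdCdf b - stdCdf a = ∫ t in a..b, stdPdf t :=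
  intervalIntegral.integral_Iic_sub_Iic stdPdf_integrable.integrableOn stdPdf_integrable.integrableOn

lemma stdCdf_hasDerivAt (y : ℝ) : HasDerivAt stdCdf (stdPdf y) y := by
  have h : HasDerivAt (fun x => stdCdf 0 + ∫ t in (0:ℝ)..x, stdPdf t) (stdPdf y) y := by
    refine HasDerivAt.const_add _ ?_
    exact intervalIntegral.integral_hasDerivAt_right
      (stdPdf_integrable.intervalIntegrable)
      stdPdf_cont.aestronglyMeasurable.stronglyMeasurableAtFilter
      stdPdf_cont.continuousAt
  have he : (fun x => stdCdf 0 + ∫ t in (0:ℝ)..x, stdPdf t) = stdCdf := by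
    ext x; rw [← stdCdf_sub]; ring
  rwa [he] at h

lemma stdCdf_strictMono : StrictMono stdCdf := by
  intro a b hab
  have : 0 < ∫ t in a..b, stdPdf t :=
    intervalIntegral.intervalIntegral_pos_of_pos_on stdPdf_integrable.intervalIntegrable
      (fun x _ => stdPdf_pos x) hab
  linarith [stdCdf_sub a b]

lemma stdCdf_nonneg (x : ℝ) : 0 ≤ stdCdf x :=
  setIntegral_nonneg measurableSet_Iic (fun t _ => (stdPdf_pos t).le)

lemma stdCdf_pos (x : ℝ) : 0 < stdCdf x := by
  have h1 := stdCdf_strictMono (show x - 1 < x by linarith)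
  linarith [stdCdf_nonneg (x - 1)]

lemma stdCdf_lt_one (x : ℝ) : stdCdf x < 1 := by
  have htot : ∫ t, stdPdf t = 1 := by
    rw [stdPdf_eq]; exact integral_gaussianPDFReal_eq_one 0 one_ne_zero
  have hsplit := intervalIntegral.integral_Iic_add_Ioi (b := x) stdPdf_integrable.integrableOn
    stdPdf_integrable.integrableOn
  have hpos : 0 < ∫ t in Set.Ioi x, stdPdf t := by
    have h1 : ∫ t in Set.Ioi x, stdPdf t ≥ ∫ t in x..(x+1), stdPdf t := by
      rw [intervalIntegral.integral_of_le (by linarith)]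
      apply setIntegral_mono_set stdPdf_integrable.integrableOn
        (Filter.Eventually.of_forall fun t => (stdPdf_pos t).le)
      exact Filter.Eventually.of_forall fun t ht => ht.1
    have h2 : 0 < ∫ t in x..(x+1), stdPdf t :=
      intervalIntegral.intervalIntegral_pos_of_pos_on stdPdf_integrable.intervalIntegrable
        (fun t _ => stdPdf_pos t) (by linarith)
    linarith
  have : stdCdf x + ∫ t in Set.Ioi x, stdPdf t = 1 := by rw [← htot]; exact hsplit
  linarith

lemma ind_diff (a b : ℝ) (ξ : ℝ → ℝ) (u : ℝ) :
    ((if u ≤ b then (1:ℝ) else 0) - (if u ≤ a then (1:ℝ) else 0)) * ξ u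
      = (Set.Ioc a b).indicator ξ u - (Set.Ioc b a).indicator ξ u := by
  simp only [Set.indicator_apply, Set.mem_Ioc]
  by_cases h1 : u ≤ b <;> by_cases h2 : u ≤ a <;>
    simp [h1, h2, not_lt.mpr, lt_of_not_ge, lt_irrefl]

lemma key_integral (p q : ℝ) (hp : p ∈ Set.Ioo (0:ℝ) 1) (hq : q ∈ Set.Ioo (0:ℝ) 1)
    (ξ : ℝ → ℝ) (hξc : Continuous ξ) :
    ∫ u in Set.Ioo (0:ℝ) 1,
      ((if u ≤ q then (1:ℝ) else 0) - (if u ≤ p then (1:ℝ) else 0)) * ξ u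
      = ∫ t in p..q, ξ t := by
  have hint : ∀ a b : ℝ, Integrable ((Set.Ioc a b).indicator ξ)
      (volume.restrict (Set.Ioo (0:ℝ) 1)) := fun a b =>
    ((hξc.integrableOn_Ioc).integrable_indicator measurableSet_Ioc).restrict
  have hIoc : ∀ a b : ℝ, a ∈ Set.Ioo (0:ℝ) 1 → b ∈ Set.Ioo (0:ℝ) 1 →
      Set.Ioc a b ⊆ Set.Ioo (0:ℝ) 1 := by
    rintro a b ⟨ha0, _⟩ ⟨_, hb1⟩ x ⟨hx1, hx2⟩
    exact ⟨lt_trans ha0 hx1, lt_of_le_of_lt hx2 hb1⟩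
  have hset : ∀ a b : ℝ, a ∈ Set.Ioo (0:ℝ) 1 → b ∈ Set.Ioo (0:ℝ) 1 →
      ∫ u in Set.Ioo (0:ℝ) 1, (Set.Ioc a b).indicator ξ u = ∫ u in Set.Ioc a b, ξ u := by
    intro a b ha hb
    rw [setIntegral_indicator measurableSet_Ioc,
      Set.inter_eq_self_of_subset_right (hIoc a b ha hb)]
  calc ∫ u in Set.Ioo (0:ℝ) 1,
      ((if u ≤ q then (1:ℝ) else 0) - (if u ≤ p then (1:ℝ) else 0)) * ξ u
      = ∫ u in Set.Ioo (0:ℝ) 1,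
        ((Set.Ioc p q).indicator ξ u - (Set.Ioc q p).indicator ξ u) := by
        apply integral_congr_ae
        exact Filter.Eventually.of_forall fun u => ind_diff p q ξ u
    _ = (∫ u in Set.Ioc p q, ξ u) - ∫ u in Set.Ioc q p, ξ u := by
        rw [integral_sub (hint p q) (hint q p), hset p q hp hq, hset q p hq hp]
    _ = ∫ t in p..q, ξ t := by
        rcases le_total p q with h | h
        · rw [Set.Ioc_eq_empty (not_lt.mpr h), intervalIntegral.integral_of_le h]
          simp
        · rw [Set.Ioc_eq_empty (not_lt.mpr h), intervalIntegral.integral_symm,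
            intervalIntegral.integral_of_le h]
          simp


/-- For `Ũ ~ Uniform(0,1)`, `p ∈ (0,1)`, and
`h_δ(Ũ) = (1/δ)(1_{Φ(Φ⁻¹(Ũ)(1+δ)) ≤ p} - 1_{Ũ ≤ p})`, for any bounded continuous
`ξ : ℝ → ℝ` we have `E[h_δ(Ũ)·ξ(Ũ)] → -Φ⁻¹(p)·φ(Φ⁻¹(p))·ξ(p)` as `δ → 0`. -/
theorem stmt_11
    {Ω : Type*} [MeasureSpace Ω] [IsProbabilityMeasure (ℙ : Measure Ω)]
    (Φinv : ℝ → ℝ)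
    (hinv₁ : ∀ u ∈ Set.Ioo (0:ℝ) 1, stdCdf (Φinv u) = u)
    (hinv₂ : ∀ x : ℝ, Φinv (stdCdf x) = x)
    (U : Ω → ℝ) (hUm : Measurable U)
    (hUunif : Measure.map U ℙ = volume.restrict (Set.Ioo (0:ℝ) 1))
    (p : ℝ) (hp : p ∈ Set.Ioo (0:ℝ) 1)
    (ξ : ℝ → ℝ) (hξc : Continuous ξ) (hξb : ∃ M : ℝ, ∀ x, |ξ x| ≤ M) :
    Tendsto
      (fun δ : ℝ => ∫ ω,
        (δ⁻¹ * ((if stdCdf (Φinv (U ω) * (1 + δ)) ≤ p then (1:ℝ) else 0)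
          - (if U ω ≤ p then (1:ℝ) else 0))) * ξ (U ω) ∂ℙ)
      (𝓝[>] 0)
      (𝓝 (-(Φinv p * stdPdf (Φinv p)) * ξ p)) := by
  set xp := Φinv p with hxp_def
  have hxp : stdCdf xp = p := hinv₁ p hp
  set q : ℝ → ℝ := fun δ => stdCdf (xp / (1 + δ)) with hq_def
  have hqmem : ∀ δ : ℝ, q δ ∈ Set.Ioo (0:ℝ) 1 := fun δ => ⟨stdCdf_pos _, stdCdf_lt_one _⟩
  -- a.e., U ω ∈ Ioo 0 1
  have hae : ∀ᵐ ω, U ω ∈ Set.Ioo (0:ℝ) 1 := by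
    have h0 : ℙ (U ⁻¹' (Set.Ioo (0:ℝ) 1)ᶜ) = 0 := by
      rw [← Measure.map_apply hUm (measurableSet_Ioo.compl), hUunif,
        Measure.restrict_apply measurableSet_Ioo.compl]
      simp
    exact h0
  -- equivalence of the indicator conditions
  have hiff : ∀ δ > (0:ℝ), ∀ u ∈ Set.Ioo (0:ℝ) 1,
      (stdCdf (Φinv u * (1 + δ)) ≤ p ↔ u ≤ q δ) := by
    intro δ hδ u hu
    have h1δ : (0:ℝ) < 1 + δ := by linarith
    have hu' : stdCdf (Φinv u) = u := hinv₁ u hu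
    rw [← hxp, stdCdf_strictMono.le_iff_le, hq_def]
    simp only
    rw [← le_div_iff₀ h1δ, ← stdCdf_strictMono.le_iff_le (a := Φinv u), hu']
  -- the integral identity for δ > 0
  have hkey : ∀ δ > (0:ℝ),
      (∫ ω, (δ⁻¹ * ((if stdCdf (Φinv (U ω) * (1 + δ)) ≤ p then (1:ℝ) else 0)
          - (if U ω ≤ p then (1:ℝ) else 0))) * ξ (U ω) ∂ℙ)
        = δ⁻¹ * ∫ t in p..(q δ), ξ t := by
    intro δ hδ
    have step1 : (∫ ω, (δ⁻¹ * ((if stdCdf (Φinv (U ω) * (1 + δ)) ≤ p then (1:ℝ) else 0)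
          - (if U ω ≤ p then (1:ℝ) else 0))) * ξ (U ω) ∂ℙ)
        = ∫ ω, (δ⁻¹ * ((if U ω ≤ q δ then (1:ℝ) else 0)
          - (if U ω ≤ p then (1:ℝ) else 0))) * ξ (U ω) ∂ℙ := by
      apply integral_congr_ae
      filter_upwards [hae] with ω hω
      rw [if_congr (hiff δ hδ (U ω) hω) rfl rfl]
    have hmeas : AEStronglyMeasurable
        (fun u : ℝ => (δ⁻¹ * ((if u ≤ q δ then (1:ℝ) else 0)
          - (if u ≤ p then (1:ℝ) else 0))) * ξ u) (Measure.map U ℙ) := by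
      apply Measurable.aestronglyMeasurable
      apply Measurable.mul _ hξc.measurable
      apply Measurable.mul measurable_const
      exact (Measurable.ite measurableSet_Iic measurable_const measurable_const).sub
        (Measurable.ite measurableSet_Iic measurable_const measurable_const)
    have step2 : (∫ ω, (δ⁻¹ * ((if U ω ≤ q δ then (1:ℝ) else 0)
          - (if U ω ≤ p then (1:ℝ) else 0))) * ξ (U ω) ∂ℙ)
        = ∫ u in Set.Ioo (0:ℝ) 1, (δ⁻¹ * ((if u ≤ q δ then (1:ℝ) else 0)
          - (if u ≤ p then (1:ℝ) else 0))) * ξ u := by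
      rw [← hUunif, ← integral_map hUm.aemeasurable hmeas]
    rw [step1, step2]
    have : ∀ u : ℝ, (δ⁻¹ * ((if u ≤ q δ then (1:ℝ) else 0)
          - (if u ≤ p then (1:ℝ) else 0))) * ξ u
        = δ⁻¹ * (((if u ≤ q δ then (1:ℝ) else 0) - (if u ≤ p then (1:ℝ) else 0)) * ξ u) := by
      intro u; ring
    simp_rw [this]
    rw [integral_const_mul, key_integral p (q δ) hp (hqmem δ) ξ hξc]
  -- derivative computation
  set F : ℝ → ℝ := fun x => ∫ t in p..x, ξ t with hF_def
  have hF : HasDerivAt F (ξ p) p :=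
    intervalIntegral.integral_hasDerivAt_right (hξc.intervalIntegrable _ _)
      hξc.aestronglyMeasurable.stronglyMeasurableAtFilter hξc.continuousAt
  have hq0val : q 0 = p := by simp [hq_def, hxp]
  have hqderiv : HasDerivAt q (stdPdf xp * (-xp)) 0 := by
    have h1 : HasDerivAt (fun δ : ℝ => 1 + δ) 1 0 := by
      simpa using (hasDerivAt_id (0:ℝ)).const_add 1
    have h2 : HasDerivAt (fun δ : ℝ => xp / (1 + δ)) (-xp) 0 := by
      have h3 := (h1.inv (by norm_num)).const_mul xp
      simp only [div_eq_mul_inv]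
      exact h3.congr_deriv (by norm_num)
    have h4 := (stdCdf_hasDerivAt (xp / (1 + 0))).comp 0 h2
    have h5 : stdPdf (xp / (1 + 0)) * -xp = stdPdf xp * -xp := by norm_num
    rw [h5] at h4
    exact h4
  have hG : HasDerivAt (fun δ => F (q δ)) (ξ p * (stdPdf xp * (-xp))) 0 := by
    have hF' : HasDerivAt F (ξ p) (q 0) := hq0val ▸ hF
    exact hF'.comp 0 hqderiv
  have hslope := hasDerivAt_iff_tendsto_slope.mp hG
  have hG0 : F (q 0) = 0 := by rw [hq0val]; simp [hF_def]
  have hlim : Tendsto (fun δ : ℝ => δ⁻¹ * F (q δ)) (𝓝[>] 0)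
      (𝓝 (-(xp * stdPdf xp) * ξ p)) := by
    have hmono : 𝓝[>] (0:ℝ) ≤ 𝓝[≠] (0:ℝ) :=
      nhdsWithin_mono 0 (fun x hx => ne_of_gt hx)
    have h := hslope.mono_left hmono
    have heq : ∀ δ : ℝ, slope (fun δ => F (q δ)) 0 δ = δ⁻¹ * F (q δ) := by
      intro δ
      simp [slope_def_field, hG0, div_eq_inv_mul]
    rw [show ξ p * (stdPdf xp * (-xp)) = -(xp * stdPdf xp) * ξ p by ring] at h
    exact Tendsto.congr heq h
  apply hlim.congr'
  filter_upwards [self_mem_nhdsWithin] with δ (hδ : (0:ℝ) < δ)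
  rw [hkey δ hδ]
end
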